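/- Let n ≥ 2 and m ≥ 2 be integers and L > 0, R > 0 reals. Set ξ = (√3/2) · R L /(m+1)^{3/2} and define f_C : ℝ^m → ℝ by f_C(x) = (L/(4n)) ( Σ_{l=1}^{m−1} (x_l − x_{l+1})² + x_m² ) − (ξ/n) x_1. Then: (i) the unique global minimizer of f_C over ℝ^m is x* with coordinates x*_i = (2ξ/L)(m + 1 − i) for i = 1, …, m; (ii) f_C(x*) = − m ξ²/(n L) and ‖x*‖ ≤ R; (iii) for every 1 ≤ k ≤ m, inf{ f_C(x) : x ∈ F_k, ‖x‖ ≤ R } − inf{ f_C(x) : ‖x‖ ≤ R } = ξ² (m − k)/(n L). -/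

import Mathlib

/-!
Write `u` for the coordinates of `x`, extended by `u_{m+1} = 0`, so that the quadratic part of
`f_C` is `(L/4n)` times the chain energy `∑ₗ (u_l - u_{l+1})²`. Completing the square against
the ramp `d_i = c (k + 1 - i)⁺` with `c = 2ξ/L`, whose increments equal `c` on the first `k`
edges and vanish afterwards, gives `f_C(x) = -kξ²/(nL) + (L/4n) · E(u - d)` whenever
`u_{k+1} = 0`, in particular on `F_k` and, for `k = m`, everywhere. Hence `-kξ²/(nL)` is the
minimum over `F_k`, attained exactly at the ramp; the choice of `ξ` together with
`∑_{j ≤ k} j² ≤ (k+1)³/3` puts the ramp in the ball of radius `R`.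
-/

open Finset

/-- `F_k = span{e_1, …, e_k} ⊆ ℝ^m` (so `F_0 = {0}`). -/
def Fspan (m k : ℕ) : Submodule ℝ (EuclideanSpace ℝ (Fin m)) :=
  Submodule.span ℝ {v | ∃ j : Fin m, (j : ℕ) < k ∧ v = EuclideanSpace.single j 1}

def chainEnergy (N : ℕ) (u : ℕ → ℝ) : ℝ :=
  ∑ l ∈ range N, (u l - u (l + 1)) ^ 2

def ramp (k : ℕ) (c : ℝ) (i : ℕ) : ℝ :=
  if i < k then c * ((k : ℝ) - i) else 0

lemma chainEnergy_nonneg (N : ℕ) (u : ℕ → ℝ) : 0 ≤ chainEnergy N u :=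
  sum_nonneg fun _ _ => sq_nonneg _

lemma sum_range_ite_lt {k N : ℕ} (hkN : k ≤ N) (g : ℕ → ℝ) :
    ∑ l ∈ range N, (if l < k then g l else 0) = ∑ l ∈ range k, g l := by
  rw [← sum_filter]
  congr 1
  ext l
  simp only [mem_filter, mem_range]
  omega

lemma ramp_sub_ramp_succ (k : ℕ) (c : ℝ) (l : ℕ) :
    ramp k c l - ramp k c (l + 1) = if l < k then c else 0 := by
  unfold ramp
  rcases lt_trichotomy (l + 1) k with h | rfl | h
  · rw [if_pos (by omega), if_pos h, if_pos (by omega)]; push_cast; ring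
  · rw [if_pos (by omega), if_neg (lt_irrefl _), if_pos (by omega)]; push_cast; ring
  · rw [if_neg (by omega), if_neg (by omega), if_neg (by omega), sub_zero]

lemma chainEnergy_eq_sub_ramp {k N : ℕ} (hkN : k ≤ N) (u : ℕ → ℝ) (c : ℝ) :
    chainEnergy N u
      = chainEnergy N (u - ramp k c) + 2 * c * (u 0 - u k) - k * c ^ 2 := by
  have hsq : ∀ l, (u l - u (l + 1)) ^ 2
      = ((u - ramp k c) l - (u - ramp k c) (l + 1)) ^ 2
        + if l < k then c * (2 * (u l - u (l + 1)) - c) else 0 := by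
    intro l
    have hδ : (u - ramp k c) l - (u - ramp k c) (l + 1)
        = (u l - u (l + 1)) - if l < k then c else 0 := by
      rw [Pi.sub_apply, Pi.sub_apply, ← ramp_sub_ramp_succ]
      ring
    rw [hδ]
    split_ifs <;> ring
  have htel : ∑ l ∈ range k, c * (2 * (u l - u (l + 1)) - c)
      = 2 * c * (u 0 - u k) - k * c ^ 2 := by
    calc ∑ l ∈ range k, c * (2 * (u l - u (l + 1)) - c)
        = ∑ l ∈ range k, (2 * c * (u l - u (l + 1)) - c ^ 2) :=
          sum_congr rfl fun _ _ => by ring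
      _ = 2 * c * (u 0 - u k) - k * c ^ 2 := by
          rw [sum_sub_distrib, ← mul_sum, sum_range_sub', sum_const, card_range, nsmul_eq_mul]
  rw [chainEnergy, chainEnergy, sum_congr rfl fun l _ => hsq l, sum_add_distrib,
    sum_range_ite_lt hkN, htel, add_sub_assoc]

lemma eq_of_chainEnergy_eq_zero {N : ℕ} {v : ℕ → ℝ} (h : chainEnergy N v = 0) {i : ℕ}
    (hi : i ≤ N) : v i = v N := by
  have hstep : ∀ l < N, v l = v (l + 1) := fun l hl => by
    have := (sum_eq_zero_iff_of_nonneg fun l _ => sq_nonneg (v l - v (l + 1))).mp h l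
      (mem_range.mpr hl)
    exact sub_eq_zero.mp (pow_eq_zero_iff two_ne_zero |>.mp this)
  suffices ∀ j i, i + j = N → v i = v N from this (N - i) i (by omega)
  intro j
  induction j with
  | zero => intro i hi; rw [← hi, add_zero]
  | succ j ih => intro i hi; rw [hstep i (by omega)]; exact ih (i + 1) (by omega)

lemma sum_range_sub_sq_le (k : ℕ) :
    ∑ i ∈ range k, ((k : ℝ) - i) ^ 2 ≤ ((k : ℝ) + 1) ^ 3 / 3 := by
  induction k with
  | zero => norm_num
  | succ k ih =>
    rw [sum_range_succ']
    push_cast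
    simp only [add_sub_add_right_eq_sub, sub_zero]
    nlinarith [ih, (k.cast_nonneg : (0 : ℝ) ≤ k)]

def zeroExt {m : ℕ} (x : EuclideanSpace ℝ (Fin m)) (i : ℕ) : ℝ :=
  if h : i < m then x ⟨i, h⟩ else 0

section zeroExt

variable {m : ℕ} (x : EuclideanSpace ℝ (Fin m)) {i : ℕ}

lemma zeroExt_of_lt (h : i < m) : zeroExt x i = x ⟨i, h⟩ := dif_pos h

lemma zeroExt_of_le (h : m ≤ i) : zeroExt x i = 0 := dif_neg (by omega)

end zeroExt

noncomputable def rampVec (m k : ℕ) (c : ℝ) : EuclideanSpace ℝ (Fin m) :=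
  WithLp.toLp 2 fun i => ramp k c i

lemma zeroExt_rampVec {m k : ℕ} (hk : k ≤ m) (c : ℝ) :
    zeroExt (rampVec m k c) = ramp k c := by
  ext i
  by_cases hi : i < m
  · rw [zeroExt_of_lt _ hi]; rfl
  · rw [zeroExt_of_le _ (not_lt.mp hi), ramp, if_neg (by omega)]

lemma norm_rampVec_sq {m k : ℕ} (hk : k ≤ m) (c : ℝ) :
    ‖rampVec m k c‖ ^ 2 = c ^ 2 * ∑ i ∈ range k, ((k : ℝ) - i) ^ 2 := by
  rw [EuclideanSpace.norm_sq_eq, mul_sum, ← sum_range_ite_lt hk]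
  simp only [Real.norm_eq_abs, sq_abs]
  rw [← Fin.sum_univ_eq_sum_range (fun i => if i < k then c ^ 2 * ((k : ℝ) - i) ^ 2 else 0)]
  refine sum_congr rfl fun i _ => ?_
  show ramp k c i ^ 2 = _
  rw [ramp]
  split_ifs <;> ring

lemma norm_rampVec_le {m k : ℕ} (hk : k ≤ m) {c R : ℝ} (hR : 0 ≤ R)
    (hc : c ^ 2 * (((m : ℝ) + 1) ^ 3 / 3) ≤ R ^ 2) : ‖rampVec m k c‖ ≤ R := by
  refine pow_le_pow_iff_left₀ (norm_nonneg _) hR two_ne_zero |>.mp ?_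
  have hkm : ((k : ℝ) + 1) ^ 3 ≤ ((m : ℝ) + 1) ^ 3 := by gcongr
  calc ‖rampVec m k c‖ ^ 2
      = c ^ 2 * ∑ i ∈ range k, ((k : ℝ) - i) ^ 2 := norm_rampVec_sq hk c
    _ ≤ c ^ 2 * (((m : ℝ) + 1) ^ 3 / 3) := by
        gcongr
        exact (sum_range_sub_sq_le k).trans (by linarith)
    _ ≤ R ^ 2 := hc

lemma mem_Fspan_iff {m k : ℕ} {x : EuclideanSpace ℝ (Fin m)} :
    x ∈ Fspan m k ↔ ∀ i : Fin m, k ≤ i → x i = 0 := by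
  constructor
  · intro hx i hi
    induction hx using Submodule.span_induction with
    | mem v hv =>
      obtain ⟨j, hj, rfl⟩ := hv
      rw [PiLp.single_apply, if_neg (by rintro rfl; omega)]
    | zero => rfl
    | add y z _ _ hy hz => rw [PiLp.add_apply, hy, hz, add_zero]
    | smul a y _ hy => rw [PiLp.smul_apply, hy, smul_zero]
  · intro h
    rw [← (EuclideanSpace.basisFun (Fin m) ℝ).sum_repr x]
    refine Submodule.sum_mem _ fun i _ => ?_
    by_cases hik : (i : ℕ) < k
    · exact Submodule.smul_mem _ _ (Submodule.subset_span ⟨i, hik, by simp⟩)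
    · simp [h i (not_lt.mp hik)]

lemma Fspan_self (m : ℕ) : Fspan m m = ⊤ :=
  eq_top_iff.mpr fun _ _ => mem_Fspan_iff.mpr fun i hi => absurd i.is_lt (not_lt.mpr hi)

/-- The paper's `f_C` in `0`-based coordinates; the term `x_m²` is the last summand
`(x_m - x_{m+1})²` of the chain energy under the convention `x_{m+1} = 0`. -/
noncomputable def fC (n : ℕ) (L ξ : ℝ) {m : ℕ} (x : EuclideanSpace ℝ (Fin m)) : ℝ :=
  L / (4 * n) * chainEnergy m (zeroExt x) - ξ / n * zeroExt x 0

lemma sum_sq_sub_add_sq_eq_chainEnergy {m : ℕ} (hm : 0 < m) (x : EuclideanSpace ℝ (Fin m)) :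
    (∑ l : Fin (m - 1),
        (x (Fin.castLE (by omega) l) - x (Fin.cast (by omega : m - 1 + 1 = m) l.succ)) ^ 2)
      + x ⟨m - 1, by omega⟩ ^ 2 = chainEnergy m (zeroExt x) := by
  have hlast : zeroExt x (m - 1 + 1) = 0 := zeroExt_of_le x (by omega)
  rw [chainEnergy, show range m = range (m - 1 + 1) by rw [Nat.sub_add_cancel hm],
    sum_range_succ, ← Fin.sum_univ_eq_sum_range, hlast, sub_zero, zeroExt_of_lt x (by omega)]
  congr 1
  refine sum_congr rfl fun l _ => ?_
  rw [zeroExt_of_lt x (by omega), zeroExt_of_lt x (by omega)]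
  rfl

section fC

variable {n m : ℕ} {L ξ : ℝ}

lemma fC_eq_of_zeroExt_eq_zero (hL : L ≠ 0) {k : ℕ} (hk : k ≤ m)
    {x : EuclideanSpace ℝ (Fin m)} (hx : zeroExt x k = 0) :
    fC n L ξ x = -(k * ξ ^ 2 / (n * L))
      + L / (4 * n) * chainEnergy m (zeroExt x - ramp k (2 * ξ / L)) := by
  rw [fC, chainEnergy_eq_sub_ramp hk _ (2 * ξ / L), hx]
  field_simp
  ring

lemma neg_le_fC (hL : 0 < L) {k : ℕ} (hk : k ≤ m) {x : EuclideanSpace ℝ (Fin m)}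
    (hx : zeroExt x k = 0) : -(k * ξ ^ 2 / (n * L)) ≤ fC n L ξ x := by
  rw [fC_eq_of_zeroExt_eq_zero hL.ne' hk hx]
  exact le_add_of_nonneg_right (mul_nonneg (by positivity) (chainEnergy_nonneg _ _))

lemma fC_rampVec (hL : L ≠ 0) {k : ℕ} (hk : k ≤ m) :
    fC n L ξ (rampVec m k (2 * ξ / L)) = -(k * ξ ^ 2 / (n * L)) := by
  have hk0 : zeroExt (rampVec m k (2 * ξ / L)) k = 0 := by
    rw [zeroExt_rampVec hk, ramp, if_neg (lt_irrefl k)]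
  rw [fC_eq_of_zeroExt_eq_zero hL hk hk0, zeroExt_rampVec hk, sub_self]
  simp [chainEnergy]

lemma eq_rampVec_of_fC_le (hn : 0 < n) (hL : 0 < L) {x : EuclideanSpace ℝ (Fin m)}
    (hx : fC n L ξ x ≤ -(m * ξ ^ 2 / (n * L))) : x = rampVec m m (2 * ξ / L) := by
  rw [fC_eq_of_zeroExt_eq_zero hL.ne' le_rfl (zeroExt_of_le x le_rfl)] at hx
  have hE : chainEnergy m (zeroExt x - ramp m (2 * ξ / L)) = 0 := by
    have : 0 < L / (4 * n) := by positivity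
    exact le_antisymm (nonpos_of_mul_nonpos_right (by linarith) this) (chainEnergy_nonneg _ _)
  ext i
  have hi := eq_of_chainEnergy_eq_zero hE i.is_lt.le
  rw [Pi.sub_apply, Pi.sub_apply, zeroExt_of_le x le_rfl, zeroExt_of_lt x i.is_lt] at hi
  change x i - ramp m _ i = 0 - ramp m _ m at hi
  change x i = ramp m _ i
  rw [show ramp m (2 * ξ / L) m = 0 from if_neg (lt_irrefl m)] at hi
  linarith

lemma isLeast_fC_image_Fspan (hL : 0 < L) {k : ℕ} (hk : k ≤ m) {R : ℝ}
    (hR : ‖rampVec m k (2 * ξ / L)‖ ≤ R) :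
    IsLeast (fC n L ξ '' {x | x ∈ Fspan m k ∧ ‖x‖ ≤ R}) (-(k * ξ ^ 2 / (n * L))) := by
  refine ⟨⟨rampVec m k _, ⟨mem_Fspan_iff.mpr fun i hi => if_neg (not_lt.mpr hi), hR⟩,
    fC_rampVec hL.ne' hk⟩, ?_⟩
  rintro _ ⟨x, ⟨hx, -⟩, rfl⟩
  refine neg_le_fC hL hk ?_
  rcases lt_or_ge k m with hkm | hkm
  · rw [zeroExt_of_lt x hkm]
    exact mem_Fspan_iff.mp hx _ le_rfl
  · exact zeroExt_of_le x hkm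

end fC

lemma two_mul_div_sq_mul_cube_div_three {m : ℕ} {L R ξ : ℝ} (hL : L ≠ 0)
    (hξ : ξ = (Real.sqrt 3 / 2) * R * L / ((m : ℝ) + 1) ^ ((3 : ℝ) / 2)) :
    (2 * ξ / L) ^ 2 * (((m : ℝ) + 1) ^ 3 / 3) = R ^ 2 := by
  have hm : (0 : ℝ) < m + 1 := by positivity
  have hpow : (((m : ℝ) + 1) ^ ((3 : ℝ) / 2)) ^ 2 = ((m : ℝ) + 1) ^ 3 := by
    rw [← Real.rpow_natCast, ← Real.rpow_mul hm.le]
    norm_num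
  have hξ2 : ξ ^ 2 = 3 / 4 * R ^ 2 * L ^ 2 / ((m : ℝ) + 1) ^ 3 := by
    rw [hξ, div_pow, mul_pow, mul_pow, div_pow, Real.sq_sqrt (by norm_num), hpow]
    ring
  rw [div_pow, mul_pow, hξ2]
  field_simp
  ring

theorem fC_minimizer_and_gap
    (n m : ℕ) (hn : 2 ≤ n) (hm : 2 ≤ m)
    (L R : ℝ) (hL : 0 < L) (hR : 0 < R)
    (ξ : ℝ) (hξ : ξ = (Real.sqrt 3 / 2) * R * L / ((m : ℝ) + 1) ^ ((3 : ℝ) / 2))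
    (f : EuclideanSpace ℝ (Fin m) → ℝ)
    (hf : ∀ x, f x =
      (L / (4 * n)) *
        ((∑ l : Fin (m - 1),
            (x (Fin.castLE (by omega) l) - x (Fin.cast (by omega : m - 1 + 1 = m) l.succ)) ^ 2)
          + (x ⟨m - 1, by omega⟩) ^ 2)
      - (ξ / n) * x ⟨0, by omega⟩)
    (xs : EuclideanSpace ℝ (Fin m))
    (hxs : ∀ i : Fin m, xs i = (2 * ξ / L) * ((m : ℝ) + 1 - ((i : ℕ) + 1))) :
    ((∀ x, f xs ≤ f x) ∧ (∀ x, (∀ w, f x ≤ f w) → x = xs)) ∧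
    (f xs = -(m * ξ ^ 2 / (n * L)) ∧ ‖xs‖ ≤ R) ∧
    (∀ k : ℕ, 1 ≤ k → k ≤ m →
      sInf (f '' {x | x ∈ Fspan m k ∧ ‖x‖ ≤ R}) - sInf (f '' {x | ‖x‖ ≤ R})
        = ξ ^ 2 * ((m : ℝ) - k) / (n * L)) := by
  obtain rfl : f = fC n L ξ := funext fun x => by
    rw [hf, sum_sq_sub_add_sq_eq_chainEnergy (by omega), ← zeroExt_of_lt x (by omega), fC]
  obtain rfl : xs = rampVec m m (2 * ξ / L) := by
    ext i
    rw [hxs, rampVec, PiLp.toLp_apply, ramp, if_pos i.is_lt]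
    ring
  have hnorm (k : ℕ) (hk : k ≤ m) : ‖rampVec m k (2 * ξ / L)‖ ≤ R :=
    norm_rampVec_le hk hR.le (two_mul_div_sq_mul_cube_div_three hL.ne' hξ).le
  have hmin := fC_rampVec (n := n) (ξ := ξ) hL.ne' (le_refl m)
  have hball := (isLeast_fC_image_Fspan (n := n) hL le_rfl (hnorm m le_rfl)).csInf_eq
  simp only [Fspan_self, Submodule.mem_top, true_and] at hball
  refine ⟨⟨fun x => hmin ▸ neg_le_fC hL le_rfl (zeroExt_of_le x le_rfl),
    fun x hx => eq_rampVec_of_fC_le (by omega) hL (hmin ▸ hx _)⟩, ⟨hmin, hnorm m le_rfl⟩,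
    fun k _ hkm => ?_⟩
  rw [(isLeast_fC_image_Fspan hL hkm (hnorm k hkm)).csInf_eq, hball]
  field_simp
  ring
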